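/- (Second bird, α = 1.) Consider an HL-flock with random interactions satisfying Condition (K) with p ∈ (0,1] and α = 1, and suppose L(2) = {1} and w_{02} := ‖v_2[0]‖ > 0. Set A0 = 1 + 2x0 and γ_2 = p/‖v_2[0]‖. Then for all t ≥ 0, E‖v_2[t+1]‖ ≤ ‖v_2[0]‖ · ( A0/(A0 + h w_{02}(t+1)) )^{γ_2}. -/

import Mathlib

open MeasureTheory Finset Filter

lemma second_bird_aux_rpow (A B hh w p : ℝ) (hA : 1 ≤ A) (hB : A ≤ B) (hw : 0 < w)
    (hp0 : 0 < p) (hp1 : p ≤ 1) (hh0 : 0 < hh) (hh1 : hh ≤ 1) :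
    (1 - hh * p / B) * (A / B) ^ (p / w) ≤ (A / (B + hh * w)) ^ (p / w) := by
  have hB0 : (0:ℝ) < B := by linarith
  have hBw : (0:ℝ) < B + hh * w := by positivity
  have hA0 : (0:ℝ) < A := by linarith
  have hγ : 0 ≤ p / w := by positivity
  have key : 1 - hh * p / B ≤ (B / (B + hh * w)) ^ (p / w) := by
    have h1 : (B / (B + hh * w)) ^ (p / w)
        = Real.exp (Real.log (B / (B + hh * w)) * (p / w)) :=
      Real.rpow_def_of_pos (by positivity) _
    have h2 : Real.log ((B + hh * w) / B) ≤ hh * w / B := by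
      have := Real.log_le_sub_one_of_pos (x := (B + hh * w) / B) (by positivity)
      have he : (B + hh * w) / B - 1 = hh * w / B := by field_simp; ring
      linarith [he ▸ this]
    have h3 : Real.log (B / (B + hh * w)) = - Real.log ((B + hh * w) / B) := by
      rw [← Real.log_inv]
      congr 1
      field_simp
    have h4 : -(hh * p / B) ≤ (p / w) * Real.log (B / (B + hh * w)) := by
      rw [h3]
      have : (p / w) * Real.log ((B + hh * w) / B) ≤ (p / w) * (hh * w / B) :=
        mul_le_mul_of_nonneg_left h2 hγ
      have he : (p / w) * (hh * w / B) = hh * p / B := by field_simp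
      nlinarith
    calc 1 - hh * p / B = (-(hh * p / B)) + 1 := by ring
      _ ≤ Real.exp (-(hh * p / B)) := Real.add_one_le_exp _
      _ ≤ Real.exp ((p / w) * Real.log (B / (B + hh * w))) := Real.exp_le_exp.2 h4
      _ = _ := by rw [h1, mul_comm]
  calc (1 - hh * p / B) * (A / B) ^ (p / w)
      ≤ (B / (B + hh * w)) ^ (p / w) * (A / B) ^ (p / w) :=
        mul_le_mul_of_nonneg_right key (Real.rpow_nonneg (by positivity) _)
    _ = ((B / (B + hh * w)) * (A / B)) ^ (p / w) :=
        (Real.mul_rpow (by positivity) (by positivity)).symm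
    _ = (A / (B + hh * w)) ^ (p / w) := by
        congr 1
        field_simp


/-- Second bird, case `α = 1`: under Condition (K) with `p ∈ (0,1]` and `α = 1`,
with `L(2) = {1}` (zero-based: `L 1 = {0}`) and `w02 := ‖v_2[0]‖ > 0`, setting
`A0 = 1 + 2 x0` and `γ2 = p/‖v_2[0]‖`, for all `t ≥ 0`,
`E‖v_2[t+1]‖ ≤ ‖v_2[0]‖ (A0/(A0 + h w02 (t+1)))^{γ2}`. -/
theorem second_bird_bound_alpha_eq_one
    (k : ℕ) (hk : 2 ≤ k)
    (Ω : Type*) [m0 : MeasurableSpace Ω]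
    (μ : Measure Ω) [IsProbabilityMeasure μ]
    (F : ℕ → MeasurableSpace Ω)
    (hFle : ∀ t, F t ≤ m0) (hFmono : Monotone F)
    (x v : ℕ → Ω → Fin k → EuclideanSpace ℝ (Fin 3))
    (L : Fin k → Finset (Fin k))
    (a : ℕ → Ω → Fin k → Fin k → ℝ)
    (h : ℝ) (hh0 : 0 < h) (hh1 : h ≤ 1 / ((k : ℝ) - 1))
    (hLlt : ∀ i : Fin k, ∀ j ∈ L i, j < i)
    (hLne : ∀ i : Fin k, 0 < i.val → (L i).Nonempty)
    (ha0 : ∀ t ω, ∀ i : Fin k, ∀ j ∈ L i, 0 ≤ a t ω i j)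
    (ha1 : ∀ t ω, ∀ i : Fin k, ∀ j ∈ L i, a t ω i j ≤ 1)
    (hxmeas : ∀ t, Measurable[F t] (x t))
    (hvmeas : ∀ t, Measurable[F t] (v t))
    (hameas : ∀ t, ∀ i : Fin k, ∀ j ∈ L i, Measurable[F t] (fun ω => a t ω i j))
    (hxdyn : ∀ t ω i, x (t + 1) ω i = x t ω i + h • v t ω i)
    (hvdyn : ∀ t ω i, v (t + 1) ω i =
      v t ω i + h • ∑ j ∈ L i, a (t + 1) ω i j • (v t ω j - v t ω i))
    (X0 V0 : Fin k → EuclideanSpace ℝ (Fin 3))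
    (hX0 : ∀ ω, x 0 ω = X0) (hV0 : ∀ ω, v 0 ω = V0)
    (hX0z : X0 ⟨0, by omega⟩ = 0) (hV0z : V0 ⟨0, by omega⟩ = 0)
    (p : ℝ) (hp0 : 0 < p) (hp1 : p ≤ 1)
    (hK : ∀ t : ℕ, ∀ i : Fin k, ∀ j ∈ L i,
      ∀ᵐ ω ∂μ, p / (1 + ‖x t ω i - x t ω j‖) ≤
        (μ[fun ω' => a (t + 1) ω' i j | F t]) ω)
    (hL2 : L ⟨1, by omega⟩ = {⟨0, by omega⟩})
    (hw02 : 0 < ‖V0 ⟨1, by omega⟩‖) :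
    ∀ t : ℕ, ∫ ω, ‖v (t + 1) ω ⟨1, by omega⟩‖ ∂μ ≤
      ‖V0 ⟨1, by omega⟩‖ *
        ((1 + 2 * ‖X0‖) /
          (1 + 2 * ‖X0‖ + h * ‖V0 ⟨1, by omega⟩‖ * (t + 1))) ^
            (p / ‖V0 ⟨1, by omega⟩‖) := by
  intro t
  -- basic setup
  have hk0 : 0 < k := by omega
  have hk1r : (1:ℝ) ≤ (k:ℝ) - 1 := by
    have : (2:ℝ) ≤ (k:ℝ) := by exact_mod_cast hk
    linarith
  have hhle1 : h ≤ 1 := by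
    refine hh1.trans ?_
    rw [div_le_one (by linarith)]
    exact hk1r
  set i0 : Fin k := ⟨0, by omega⟩ with hi0
  set i1 : Fin k := ⟨1, by omega⟩ with hi1
  set w : ℝ := ‖V0 i1‖ with hw
  set A : ℝ := 1 + 2 * ‖X0‖ with hA
  have hA1 : (1:ℝ) ≤ A := by
    have := norm_nonneg X0; simp only [hA]; linarith
  have hwpos : 0 < w := hw02
  -- L i0 = ∅
  have hL0 : L i0 = ∅ := by
    rw [Finset.eq_empty_iff_forall_notMem]
    intro j hj
    have := hLlt i0 j hj
    exact absurd this (by simp [hi0, Fin.lt_def])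
  -- bird 0 stays at rest
  have hv0 : ∀ t ω, v t ω i0 = 0 := by
    intro t
    induction t with
    | zero => intro ω; rw [hV0]; exact hV0z
    | succ s ih =>
      intro ω
      rw [hvdyn, hL0, ih ω]
      simp
  have hx0 : ∀ t ω, x t ω i0 = 0 := by
    intro t
    induction t with
    | zero => intro ω; rw [hX0]; exact hX0z
    | succ s ih =>
      intro ω
      rw [hxdyn, ih ω, hv0]
      simp
  have hmem : i0 ∈ L i1 := by rw [hL2]; exact Finset.mem_singleton_self _
  -- the recursion for bird 1's velocity
  have hrec : ∀ t ω, v (t+1) ω i1 = (1 - h * a (t+1) ω i1 i0) • v t ω i1 := by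
    intro t ω
    rw [hvdyn, hL2, Finset.sum_singleton, hv0]
    rw [zero_sub, smul_neg, smul_neg, sub_smul, one_smul, smul_smul]
    abel
  have hb0 : ∀ t ω, 0 ≤ 1 - h * a (t+1) ω i1 i0 := by
    intro t ω
    have h1 := ha1 (t+1) ω i1 i0 hmem
    have h0 := ha0 (t+1) ω i1 i0 hmem
    nlinarith
  have hb1 : ∀ t ω, 1 - h * a (t+1) ω i1 i0 ≤ 1 := by
    intro t ω
    have h0 := ha0 (t+1) ω i1 i0 hmem
    nlinarith
  have hnorm : ∀ t ω, ‖v (t+1) ω i1‖ = (1 - h * a (t+1) ω i1 i0) * ‖v t ω i1‖ := by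
    intro t ω
    rw [hrec, norm_smul, Real.norm_eq_abs, abs_of_nonneg (hb0 t ω)]
  have hvle : ∀ t ω, ‖v t ω i1‖ ≤ w := by
    intro t
    induction t with
    | zero => intro ω; rw [hV0]
    | succ s ih =>
      intro ω
      rw [hnorm]
      calc (1 - h * a (s+1) ω i1 i0) * ‖v s ω i1‖ ≤ 1 * ‖v s ω i1‖ :=
            mul_le_mul_of_nonneg_right (hb1 s ω) (norm_nonneg _)
        _ ≤ w := by rw [one_mul]; exact ih ω
  have hxle : ∀ t ω, ‖x t ω i1‖ ≤ ‖X0‖ + h * w * t := by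
    intro t
    induction t with
    | zero =>
      intro ω
      rw [hX0]
      simpa using norm_le_pi_norm X0 i1
    | succ s ih =>
      intro ω
      rw [hxdyn]
      calc ‖x s ω i1 + h • v s ω i1‖ ≤ ‖x s ω i1‖ + ‖h • v s ω i1‖ := norm_add_le _ _
        _ ≤ (‖X0‖ + h * w * s) + h * w := by
            have : ‖h • v s ω i1‖ = h * ‖v s ω i1‖ := by
              rw [norm_smul, Real.norm_eq_abs, abs_of_nonneg hh0.le]
            rw [this]
            have := mul_le_mul_of_nonneg_left (hvle s ω) hh0.le
            linarith [ih ω]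
        _ = ‖X0‖ + h * w * (s+1 : ℕ) := by push_cast; ring
  -- a.e. lower bound on conditional expectation
  have hKa : ∀ t : ℕ, ∀ᵐ ω ∂μ, p / (A + h * w * t) ≤
      (μ[fun ω' => a (t+1) ω' i1 i0 | F t]) ω := by
    intro t
    filter_upwards [hK t i1 i0 hmem] with ω hω
    refine le_trans ?_ hω
    have hx1 : ‖x t ω i1 - x t ω i0‖ = ‖x t ω i1‖ := by rw [hx0, sub_zero]
    rw [hx1]
    have hle : 1 + ‖x t ω i1‖ ≤ A + h * w * t := by
      have := hxle t ω
      have h2 : ‖X0‖ ≤ 2 * ‖X0‖ := by have := norm_nonneg X0; linarith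
      simp only [hA]; linarith
    have hpos : (0:ℝ) < 1 + ‖x t ω i1‖ := by positivity
    exact div_le_div_of_nonneg_left hp0.le hpos hle
  -- measurability and integrability
  have hfmeasF : ∀ t : ℕ, Measurable[F t] (fun ω => ‖v t ω i1‖) := fun t =>
    measurable_norm.comp ((measurable_pi_apply i1).comp (hvmeas t))
  have hfmeas : ∀ t : ℕ, Measurable (fun ω => ‖v t ω i1‖) := fun t =>
    (hfmeasF t).mono (hFle t) le_rfl
  have hfint : ∀ t : ℕ, Integrable (fun ω => ‖v t ω i1‖) μ := by
    intro t
    refine Integrable.mono' (integrable_const w) (hfmeas t).aestronglyMeasurable ?_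
    filter_upwards with ω
    rw [Real.norm_eq_abs, abs_of_nonneg (norm_nonneg _)]
    exact hvle t ω
  have hameas' : ∀ t : ℕ, Measurable (fun ω => a (t+1) ω i1 i0) := fun t =>
    (hameas (t+1) i1 i0 hmem).mono (hFle (t+1)) le_rfl
  have haint : ∀ t : ℕ, Integrable (fun ω => a (t+1) ω i1 i0) μ := by
    intro t
    refine Integrable.mono' (integrable_const 1) (hameas' t).aestronglyMeasurable ?_
    filter_upwards with ω
    rw [Real.norm_eq_abs, abs_of_nonneg (ha0 (t+1) ω i1 i0 hmem)]
    exact ha1 (t+1) ω i1 i0 hmem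
  -- the key integral recursion
  have hstep : ∀ t : ℕ, ∫ ω, ‖v (t+1) ω i1‖ ∂μ ≤
      (1 - h * (p / (A + h * w * t))) * ∫ ω, ‖v t ω i1‖ ∂μ := by
    intro t
    have hcond : (μ[(fun ω => ‖v t ω i1‖) * (fun ω => a (t+1) ω i1 i0) | F t])
        =ᵐ[μ] (fun ω => ‖v t ω i1‖) * (μ[fun ω' => a (t+1) ω' i1 i0 | F t]) :=
      condExp_stronglyMeasurable_mul_of_bound (hFle t)
        (Measurable.stronglyMeasurable (mα := F t) (hfmeasF t)) (haint t) w
        (by filter_upwards with ω;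
            rw [Real.norm_eq_abs, abs_of_nonneg (norm_nonneg _)]; exact hvle t ω)
    have hintmul : Integrable (fun ω => ‖v t ω i1‖ * a (t+1) ω i1 i0) μ :=
      Integrable.bdd_mul (haint t) (hfmeas t).aestronglyMeasurable
        (c := w) (Eventually.of_forall fun ω => by
          rw [Real.norm_eq_abs, abs_of_nonneg (norm_nonneg _)]; exact hvle t ω)
    have hintmulc : Integrable
        (fun ω => ‖v t ω i1‖ * (μ[fun ω' => a (t+1) ω' i1 i0 | F t]) ω) μ :=
      Integrable.bdd_mul integrable_condExp (hfmeas t).aestronglyMeasurable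
        (c := w) (Eventually.of_forall fun ω => by
          rw [Real.norm_eq_abs, abs_of_nonneg (norm_nonneg _)]; exact hvle t ω)
    have heq1 : ∫ ω, ‖v t ω i1‖ * a (t+1) ω i1 i0 ∂μ
        = ∫ ω, ‖v t ω i1‖ * (μ[fun ω' => a (t+1) ω' i1 i0 | F t]) ω ∂μ := by
      rw [← integral_condExp (hFle t) (f := fun ω => ‖v t ω i1‖ * a (t+1) ω i1 i0)]
      exact integral_congr_ae hcond
    have hge : (p / (A + h * w * t)) * ∫ ω, ‖v t ω i1‖ ∂μ
        ≤ ∫ ω, ‖v t ω i1‖ * a (t+1) ω i1 i0 ∂μ := by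
      rw [heq1, ← integral_const_mul]
      refine integral_mono_ae (Integrable.const_mul (hfint t) _) hintmulc ?_
      filter_upwards [hKa t] with ω hω
      calc (p / (A + h * w * t)) * ‖v t ω i1‖ = ‖v t ω i1‖ * (p / (A + h * w * t)) := by ring
        _ ≤ ‖v t ω i1‖ * (μ[fun ω' => a (t+1) ω' i1 i0 | F t]) ω :=
            mul_le_mul_of_nonneg_left hω (norm_nonneg _)
    have heq2 : ∫ ω, ‖v (t+1) ω i1‖ ∂μ
        = (∫ ω, ‖v t ω i1‖ ∂μ) - h * ∫ ω, ‖v t ω i1‖ * a (t+1) ω i1 i0 ∂μ := by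
      have : ∀ ω, ‖v (t+1) ω i1‖ = ‖v t ω i1‖ - h * (‖v t ω i1‖ * a (t+1) ω i1 i0) := by
        intro ω; rw [hnorm]; ring
      simp_rw [this]
      rw [integral_sub (hfint t) (Integrable.const_mul hintmul h), integral_const_mul]
    rw [heq2]
    have := mul_le_mul_of_nonneg_left hge hh0.le
    linarith
  -- base value
  have hbase : ∫ ω, ‖v 0 ω i1‖ ∂μ = w := by
    have : (fun ω => ‖v 0 ω i1‖) = fun _ => w := by
      funext ω; rw [hV0]
    rw [this, integral_const, probReal_univ]
    simp
  have hSnn : ∀ t : ℕ, 0 ≤ ∫ ω, ‖v t ω i1‖ ∂μ := fun t =>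
    integral_nonneg (fun ω => norm_nonneg _)
  -- main induction
  have hmain : ∀ t : ℕ, ∫ ω, ‖v t ω i1‖ ∂μ ≤ w * (A / (A + h * w * t)) ^ (p / w) := by
    intro t
    induction t with
    | zero =>
      rw [hbase]
      simp only [Nat.cast_zero, mul_zero, add_zero]
      rw [div_self (by linarith), Real.one_rpow, mul_one]
    | succ s ih =>
      have hB1 : (1:ℝ) ≤ A + h * w * s := by
        have : (0:ℝ) ≤ h * w * s := by positivity
        linarith
      have hq1 : 0 ≤ 1 - h * (p / (A + h * w * s)) := by
        have h1 : h * (p / (A + h * w * s)) ≤ 1 * (1 / 1) := by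
          gcongr <;> linarith
        linarith
      calc ∫ ω, ‖v (s+1) ω i1‖ ∂μ
          ≤ (1 - h * (p / (A + h * w * s))) * ∫ ω, ‖v s ω i1‖ ∂μ := hstep s
        _ ≤ (1 - h * (p / (A + h * w * s))) * (w * (A / (A + h * w * s)) ^ (p / w)) :=
            mul_le_mul_of_nonneg_left ih hq1
        _ = w * ((1 - h * p / (A + h * w * s)) * (A / (A + h * w * s)) ^ (p / w)) := by
            rw [mul_div_assoc]; ring
        _ ≤ w * (A / ((A + h * w * s) + h * w)) ^ (p / w) := by
            refine mul_le_mul_of_nonneg_left ?_ hwpos.le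
            exact second_bird_aux_rpow A (A + h * w * s) h w p hA1 (le_add_of_nonneg_right (by positivity)) hwpos
              hp0 hp1 hh0 hhle1
        _ = w * (A / (A + h * w * (s+1 : ℕ))) ^ (p / w) := by push_cast; ring_nf
  have := hmain (t+1)
  push_cast at this ⊢
  convert this using 4 <;> ring
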